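/- If real numbers x and y satisfy d(x,y) = 0 and Nτ(x,y) = 0, then x = 0, x = 1, x = 3, or x = −2. -/
import Mathlib

def d (x y : ℝ) : ℝ := x^2*y + 3*x^2 - x*y - 3*y^2 - 3*x - 3*y
def Ntau (x y : ℝ) : ℝ := (y - x) * (2*x + 3*y + 1)

theorem zeros_of_Ntau (x y : ℝ) (hd : d x y = 0) (hN : Ntau x y = 0) :
    x = 0 ∨ x = 1 ∨ x = 3 ∨ x = -2 := by
  unfold d at hd
  unfold Ntau at hN
  rcases mul_eq_zero.mp hN with h | h
  · have hyx : y = x := sub_eq_zero.mp h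
    have hfac : x * ((x - 3) * (x + 2)) = 0 := by
      linear_combination hd + (-x^2 + 4*x + 3*y + 3)*h
    rcases mul_eq_zero.mp hfac with h0 | h1
    · exact Or.inl h0
    · rcases mul_eq_zero.mp h1 with h2 | h3
      · exact Or.inr (Or.inr (Or.inl (by linarith)))
      · exact Or.inr (Or.inr (Or.inr (by linarith)))
  · have hx : (x - 1)^3 = 0 := by
      linear_combination (-3/2)*hd + ((1/2)*x^2 - (3/2)*y + (1/2)*x - 1)*h
    have : x - 1 = 0 := by
      exact pow_eq_zero_iff (by norm_num) |>.mp hx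
    exact Or.inr (Or.inl (by linarith))
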